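/- Let f ∈ Γ₀(ℝ^n) be sparsity promoting, α, β > 0, and f_α = f − env_{αf}. For any x in the domain of f, every element p of prox_{βf_α}(x) := argmin_u { f_α(u) + (1/(2β))‖u−x‖² } satisfies ‖p − x‖ ≤ ‖x‖. -/

import Mathlib

open Set
open scoped RealInnerProductSpace Pointwise

noncomputable section

abbrev E (n : ℕ) := EuclideanSpace ℝ (Fin n)

/-- Convex subdifferential. -/
def subdiff {n : ℕ} (f : E n → ℝ) (x : E n) : Set (E n) :=
  {d | ∀ y, f x + ⟪d, y - x⟫ ≤ f y}

/-- Fréchet subdifferential. -/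
def fsubdiff {n : ℕ} (f : E n → ℝ) (x : E n) : Set (E n) :=
  {d | ∀ ε > (0:ℝ), ∃ δ > (0:ℝ), ∀ u, ‖u - x‖ < δ →
    f x + ⟪d, u - x⟫ - ε * ‖u - x‖ ≤ f u}

/-- Sparsity promoting: value 0 at the origin is the global minimum and the
subdifferential at 0 contains a nonzero element. -/
def SparsityPromoting {n : ℕ} (f : E n → ℝ) : Prop :=
  f 0 = 0 ∧ (∀ x, f 0 ≤ f x) ∧ ∃ d ∈ subdiff f 0, d ≠ 0

/-- Moreau envelope with parameter `α`. -/
def env {n : ℕ} (α : ℝ) (f : E n → ℝ) (x : E n) : ℝ :=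
  sInf (Set.range fun u => f u + ‖u - x‖ ^ 2 / (2 * α))

/-- Proximity operator (as a set of minimizers). -/
def proxSet {n : ℕ} (α : ℝ) (f : E n → ℝ) (x : E n) : Set (E n) :=
  {p | ∀ u, f p + ‖p - x‖ ^ 2 / (2 * α) ≤ f u + ‖u - x‖ ^ 2 / (2 * α)}

/-! Because `f ≥ 0 = f 0`, the envelope satisfies `0 ≤ env α f ≤ f` and vanishes at `0`, so
`f_α = f - env α f` is nonnegative with `f_α 0 = 0`. Comparing a minimizer `p` with the competitor
`u = 0` then gives `‖p - x‖² / (2β) ≤ ‖x‖² / (2β)`. -/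

section MoreauEnvelope

variable {n : ℕ} {α : ℝ} {f : E n → ℝ}

lemma bddBelow_range_add_sq_norm_div (hα : 0 ≤ α) {m : ℝ} (hf : ∀ u, m ≤ f u) (x : E n) :
    BddBelow (range fun u => f u + ‖u - x‖ ^ 2 / (2 * α)) := by
  refine ⟨m, ?_⟩
  rintro _ ⟨u, rfl⟩
  have : 0 ≤ ‖u - x‖ ^ 2 / (2 * α) := by positivity
  linarith [hf u]

lemma env_le_self (hα : 0 ≤ α) {m : ℝ} (hf : ∀ u, m ≤ f u) (x : E n) : env α f x ≤ f x := by
  simpa [env] using csInf_le (bddBelow_range_add_sq_norm_div hα hf x) (mem_range_self x)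

lemma le_env (hα : 0 ≤ α) {m : ℝ} (hf : ∀ u, m ≤ f u) (x : E n) : m ≤ env α f x := by
  refine le_csInf (range_nonempty _) ?_
  rintro _ ⟨u, rfl⟩
  have : 0 ≤ ‖u - x‖ ^ 2 / (2 * α) := by positivity
  linarith [hf u]

lemma env_eq_self_of_forall_le (hα : 0 ≤ α) {x : E n} (hx : ∀ u, f x ≤ f u) :
    env α f x = f x :=
  le_antisymm (env_le_self hα hx x) (le_env hα hx x)

end MoreauEnvelope

lemma norm_sub_le_of_mem_proxSet {n : ℕ} {β : ℝ} (hβ : 0 < β) {g : E n → ℝ}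
    (hg : ∀ u, 0 ≤ g u) (hg0 : g 0 = 0) {x p : E n} (hp : p ∈ proxSet β g x) :
    ‖p - x‖ ≤ ‖x‖ := by
  have hcmp := hp 0
  rw [hg0, zero_sub, norm_neg] at hcmp
  have hsq : ‖p - x‖ ^ 2 ≤ ‖x‖ ^ 2 :=
    (div_le_div_iff_of_pos_right (by positivity : (0 : ℝ) < 2 * β)).mp (by linarith [hg p])
  exact (pow_le_pow_iff_left₀ (norm_nonneg _) (norm_nonneg _) two_ne_zero).mp hsq

theorem stmt7_general {n : ℕ} (f : E n → ℝ) (hsp : SparsityPromoting f)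
    (α β : ℝ) (hα : 0 < α) (hβ : 0 < β) :
    ∀ x : E n, ∀ p ∈ proxSet β (fun u => f u - env α f u) x, ‖p - x‖ ≤ ‖x‖ := by
  obtain ⟨hf0, hmin, -⟩ := hsp
  have hf : ∀ u, 0 ≤ f u := fun u => hf0 ▸ hmin u
  intro x p hp
  refine norm_sub_le_of_mem_proxSet hβ (fun u => ?_) ?_ hp
  · exact sub_nonneg.mpr (env_le_self hα.le hf u)
  · simp only [env_eq_self_of_forall_le hα.le hmin, sub_self]

theorem stmt7 {n : ℕ} (f : E n → ℝ) (hconv : ConvexOn ℝ Set.univ f)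
    (hlsc : LowerSemicontinuous f) (hsp : SparsityPromoting f)
    (α β : ℝ) (hα : 0 < α) (hβ : 0 < β) :
    ∀ x : E n, ∀ p ∈ proxSet β (fun u => f u - env α f u) x, ‖p - x‖ ≤ ‖x‖ :=
  stmt7_general f hsp α β hα hβ
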